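/- The algebras L⁴₀₇ and L⁴₀₅ over ℂ, given on basis e₁,...,e₄ by (L⁴₀₇): e₁e₁=e₃, e₂e₂=e₃, e₃e₁=e₄, e₃e₂=ie₄ and (L⁴₀₅): e₁e₁=e₃, e₂e₂=e₃, e₃e₁=e₄, are not isomorphic. -/

import Mathlib

/-!
Both algebras have `A² = ⟨e₃, e₄⟩`, and on `A/A²` they carry the quadratic form `q(x) = x₁² + x₂²`
(the `e₃`-coordinate of `x x`) and the linear form `λ(x)` with `e₃ x = λ(x) e₄`. In `L⁴₀₇`,
`λ(x) = x₁ + i x₂` divides `q = (x₁ + i x₂)(x₁ - i x₂)`, so `x = e₁ + i e₂` satisfies `x x = 0` and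
`(y y) x = 0` for all `y`, while `e₁ x ≠ 0`. In `L⁴₀₅`, `λ(x) = x₁` and `q` is anisotropic on its
kernel, so no element has these three properties; the property is preserved by isomorphisms.
-/

open Complex

/-- Multiplication of `L⁴₀₇`: nonzero products `e₁e₁ = e₃`, `e₂e₂ = e₃`,
`e₃e₁ = e₄`, `e₃e₂ = i e₄` (indices `0,…,3`). -/
noncomputable def mulL407 (x y : Fin 4 → ℂ) : Fin 4 → ℂ :=
  ![0, 0, x 0 * y 0 + x 1 * y 1, x 2 * y 0 + I * (x 2 * y 1)]

/-- Multiplication of `L⁴₀₅`: nonzero products `e₁e₁ = e₃`, `e₂e₂ = e₃`,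
`e₃e₁ = e₄` (indices `0,…,3`). -/
def mulL405 (x y : Fin 4 → ℂ) : Fin 4 → ℂ :=
  ![0, 0, x 0 * y 0 + x 1 * y 1, x 2 * y 0]

def SquareZeroWitness {M : Type*} [Zero M] (mul : M → M → M) (x : M) : Prop :=
  mul x x = 0 ∧ (∀ y, mul (mul y y) x = 0) ∧ ∃ y, mul y x ≠ 0

theorem SquareZeroWitness.map {M N : Type*} [AddCommMonoid M] [AddCommMonoid N]
    {mulM : M → M → M} {mulN : N → N → N} (φ : M ≃+ N)
    (hφ : ∀ a b, φ (mulM a b) = mulN (φ a) (φ b)) {x : M} (hx : SquareZeroWitness mulM x) :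
    SquareZeroWitness mulN (φ x) := by
  obtain ⟨hxx, hyx, y, hy⟩ := hx
  refine ⟨?_, fun z => ?_, φ y, ?_⟩
  · rw [← hφ, hxx, map_zero]
  · obtain ⟨w, rfl⟩ := φ.surjective z
    rw [← hφ, ← hφ, hyx, map_zero]
  · rwa [← hφ, ne_eq, map_eq_zero_iff φ φ.injective]

theorem squareZeroWitness_mulL407 : SquareZeroWitness mulL407 ![1, I, 0, 0] := by
  refine ⟨?_, fun y => ?_, ![1, 0, 0, 0], ?_⟩
  · ext i; fin_cases i <;> simp [mulL407]
  · ext i; fin_cases i <;> simp [mulL407]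
    linear_combination (y 0 * y 0 + y 1 * y 1) * I_mul_I
  · intro h
    simpa [mulL407] using congrFun h 2

theorem not_squareZeroWitness_mulL405 (x : Fin 4 → ℂ) : ¬ SquareZeroWitness mulL405 x := by
  rintro ⟨hxx, hyx, y, hy⟩
  have hx0 : x 0 = 0 := by simpa [mulL405] using congrFun (hyx ![1, 0, 0, 0]) 3
  have hx1 : x 1 = 0 := by simpa [mulL405, hx0] using congrFun hxx 2
  exact hy (by ext i; fin_cases i <;> simp [mulL405, hx0, hx1])

/-- the algebras `L⁴₀₇` and `L⁴₀₅` are not isomorphic. -/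
theorem L407_not_isomorphic_L405 :
    ¬ ∃ φ : (Fin 4 → ℂ) ≃ₗ[ℂ] (Fin 4 → ℂ),
        ∀ a b : Fin 4 → ℂ, φ (mulL407 a b) = mulL405 (φ a) (φ b) := by
  rintro ⟨φ, hφ⟩
  exact not_squareZeroWitness_mulL405 _ (squareZeroWitness_mulL407.map φ.toAddEquiv hφ)
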